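/- arXiv:2404.03941 — 4 statements merged into one kernel-verified Lean document; each statement's English description precedes it below -/
import Mathlib

section
/- Let Ω ⊆ ℝ^N be an open set and 0 < q < N/(N-1). Then limsup_{p→1^+} λ_{p,q}(Ω) ≤ λ_{1,q}(Ω). -/
/-!
For a fixed admissible `u`, boundedness of `|∇u|` by some `C ≥ 1` gives
`∫ |∇u|^p ≤ C^{p-1} ∫ |∇u|`, and the right-hand side tends to `∫ |∇u|` as `p → 1⁺`; so the
limsup of `λ_{p,q}(Ω)` is at most `∫ |∇u|` for every admissible `u`, hence at most `λ_{1,q}(Ω)`.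
If there is no admissible `u`, every `λ_{p,q}(Ω)` is `sInf ∅ = 0`.
-/

open MeasureTheory Set Filter
open scoped ENNReal

noncomputable section

/-- `E` has smooth boundary: near each boundary point, `E` is the sublevel set of a smooth
function with non-vanishing differential. -/
def HasSmoothBoundary {N : ℕ} (E : Set (EuclideanSpace ℝ (Fin N))) : Prop :=
  ∀ x ∈ frontier E, ∃ U : Set (EuclideanSpace ℝ (Fin N)), IsOpen U ∧ x ∈ U ∧
    ∃ f : EuclideanSpace ℝ (Fin N) → ℝ, ContDiff ℝ (⊤ : ℕ∞) f ∧
      (∀ y ∈ U, (y ∈ E ↔ f y < 0)) ∧ (∀ y ∈ U, fderiv ℝ f y ≠ 0)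

/-- The ratio `H^{N-1}(∂E) / |E|^{1/q}`. -/
def cheegerRatio {N : ℕ} (q : ℝ) (E : Set (EuclideanSpace ℝ (Fin N))) : ℝ :=
  (MeasureTheory.Measure.hausdorffMeasure ((N : ℝ) - 1) (frontier E)).toReal /
    (volume E).toReal ^ (1 / q)

/-- The generalized Cheeger constant `h_q(Ω)`. -/
def cheeger {N : ℕ} (q : ℝ) (Ω : Set (EuclideanSpace ℝ (Fin N))) : ℝ :=
  sInf { r : ℝ | ∃ E : Set (EuclideanSpace ℝ (Fin N)), IsOpen E ∧ E.Nonempty ∧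
    IsCompact (closure E) ∧ closure E ⊆ Ω ∧ HasSmoothBoundary E ∧ r = cheegerRatio q E }

/-- The sharp Poincaré–Sobolev constant `λ_{p,q}(Ω)`. -/
def poincare {N : ℕ} (p q : ℝ) (Ω : Set (EuclideanSpace ℝ (Fin N))) : ℝ :=
  sInf { r : ℝ | ∃ u : EuclideanSpace ℝ (Fin N) → ℝ, ContDiff ℝ (⊤ : ℕ∞) u ∧
    HasCompactSupport u ∧ tsupport u ⊆ Ω ∧
    (∫ x in Ω, |u x| ^ q) = 1 ∧ r = ∫ x in Ω, ‖fderiv ℝ u x‖ ^ p }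

/-- The inradius of `Ω`, as an extended nonnegative real. -/
def einradius {N : ℕ} (Ω : Set (EuclideanSpace ℝ (Fin N))) : ℝ≥0∞ :=
  ⨆ x ∈ Ω, EMetric.infEdist x Ωᶜ

/-- The inradius of `Ω`, as a real number. -/
def inradius {N : ℕ} (Ω : Set (EuclideanSpace ℝ (Fin N))) : ℝ :=
  (einradius Ω).toReal

/-- The high ridge set of `Ω`. -/
def highRidge {N : ℕ} (Ω : Set (EuclideanSpace ℝ (Fin N))) : Set (EuclideanSpace ℝ (Fin N)) :=
  {x ∈ Ω | Metric.ball x (inradius Ω) ⊆ Ω}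

/-- The volume of the unit ball of `ℝ^N`. -/
def ballVol (N : ℕ) : ℝ :=
  (volume (Metric.ball (0 : EuclideanSpace ℝ (Fin N)) 1)).toReal

open Topology

def PoincareAdmissible {N : ℕ} (q : ℝ) (Ω : Set (EuclideanSpace ℝ (Fin N)))
    (u : EuclideanSpace ℝ (Fin N) → ℝ) : Prop :=
  ContDiff ℝ (⊤ : ℕ∞) u ∧ HasCompactSupport u ∧ tsupport u ⊆ Ω ∧ (∫ x in Ω, |u x| ^ q) = 1

section Poincare

variable {N : ℕ} {p q : ℝ} {Ω : Set (EuclideanSpace ℝ (Fin N))}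

theorem poincare_nonneg : 0 ≤ poincare p q Ω :=
  Real.sInf_nonneg <| by
    rintro _ ⟨u, -, -, -, -, rfl⟩
    exact integral_nonneg fun x => Real.rpow_nonneg (norm_nonneg _) p

theorem poincare_le_integral {u : EuclideanSpace ℝ (Fin N) → ℝ} (hu : PoincareAdmissible q Ω u) :
    poincare p q Ω ≤ ∫ x in Ω, ‖fderiv ℝ u x‖ ^ p := by
  refine csInf_le ⟨0, ?_⟩ ⟨u, hu.1, hu.2.1, hu.2.2.1, hu.2.2.2, rfl⟩
  rintro _ ⟨v, -, -, -, -, rfl⟩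
  exact integral_nonneg fun x => Real.rpow_nonneg (norm_nonneg _) p

theorem poincare_eq_zero_of_not_exists_admissible (h : ¬ ∃ u, PoincareAdmissible q Ω u) :
    poincare p q Ω = 0 := by
  refine (congrArg sInf (Set.eq_empty_of_forall_notMem ?_)).trans Real.sInf_empty
  rintro _ ⟨u, hu, hcs, hsupp, hnorm, -⟩
  exact h ⟨u, hu, hcs, hsupp, hnorm⟩

end Poincare

theorem Real.rpow_le_rpow_sub_one_mul {a C p : ℝ} (ha : 0 ≤ a) (haC : a ≤ C) (hp : 1 ≤ p) :
    a ^ p ≤ C ^ (p - 1) * a := by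
  rcases ha.eq_or_lt with rfl | ha
  · simp [Real.zero_rpow (by linarith : p ≠ 0)]
  calc a ^ p = a ^ (p - 1) * a := by rw [Real.rpow_sub_one ha.ne', div_mul_cancel₀ _ ha.ne']
    _ ≤ C ^ (p - 1) * a := by gcongr

theorem integral_rpow_le_rpow_sub_one_mul_integral {α : Type*} [MeasurableSpace α]
    {μ : Measure α} {g : α → ℝ} {C p : ℝ} (hg : Integrable g μ) (hg0 : ∀ x, 0 ≤ g x)
    (hgC : ∀ x, g x ≤ C) (hp : 1 ≤ p) :
    ∫ x, g x ^ p ∂μ ≤ C ^ (p - 1) * ∫ x, g x ∂μ := by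
  rw [← integral_const_mul]
  exact integral_mono_of_nonneg (.of_forall fun x => Real.rpow_nonneg (hg0 x) p)
    (hg.const_mul _) (.of_forall fun x => Real.rpow_le_rpow_sub_one_mul (hg0 x) (hgC x) hp)

theorem limsup_poincare_le_integral_norm_fderiv {N : ℕ} {q : ℝ}
    {Ω : Set (EuclideanSpace ℝ (Fin N))} {u : EuclideanSpace ℝ (Fin N) → ℝ}
    (hu : PoincareAdmissible q Ω u) :
    limsup (fun p : ℝ => poincare p q Ω) (𝓝[>] 1) ≤ ∫ x in Ω, ‖fderiv ℝ u x‖ := by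
  set I := ∫ x in Ω, ‖fderiv ℝ u x‖
  have hDu : Continuous fun x => ‖fderiv ℝ u x‖ := (hu.1.continuous_fderiv (by simp)).norm
  have hDu_cs : HasCompactSupport fun x => ‖fderiv ℝ u x‖ := (hu.2.1.fderiv ℝ).norm
  obtain ⟨C₀, hC₀⟩ := hDu.bounded_above_of_compact_support hDu_cs
  set C := max C₀ 1
  have hC : C ≠ 0 := (zero_lt_one.trans_le (le_max_right _ _)).ne'
  have hbound : ∀ᶠ p in 𝓝[>] 1, poincare p q Ω ≤ C ^ (p - 1) * I := by
    filter_upwards [self_mem_nhdsWithin] with p hp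
    refine (poincare_le_integral hu).trans <| integral_rpow_le_rpow_sub_one_mul_integral
      (hDu.integrable_of_hasCompactSupport hDu_cs).restrict (fun x => norm_nonneg _)
      (fun x => (le_abs_self _).trans ((hC₀ x).trans (le_max_left _ _))) hp.le
  have hlim : Tendsto (fun p : ℝ => C ^ (p - 1) * I) (𝓝[>] 1) (𝓝 I) := by
    have : ContinuousAt (fun p : ℝ => C ^ (p - 1) * I) 1 := by fun_prop (disch := exact hC)
    simpa using this.tendsto.mono_left nhdsWithin_le_nhds
  calc limsup (fun p : ℝ => poincare p q Ω) (𝓝[>] 1)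
      ≤ limsup (fun p : ℝ => C ^ (p - 1) * I) (𝓝[>] 1) :=
        limsup_le_limsup hbound (isCoboundedUnder_le_of_le _ fun _ => poincare_nonneg)
          hlim.isBoundedUnder_le
    _ = I := hlim.limsup_eq

theorem statement_2_general (N : ℕ) (Ω : Set (EuclideanSpace ℝ (Fin N)))
    (q : ℝ) :
    Filter.limsup (fun p : ℝ => poincare p q Ω) (nhdsWithin 1 (Set.Ioi 1))
      ≤ poincare 1 q Ω := by
  by_cases h : ∃ u, PoincareAdmissible q Ω u
  · obtain ⟨u, hu⟩ := h
    refine le_csInf ⟨_, u, hu.1, hu.2.1, hu.2.2.1, hu.2.2.2, rfl⟩ ?_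
    rintro _ ⟨v, hv, hcs, hsupp, hnorm, rfl⟩
    simpa using limsup_poincare_le_integral_norm_fderiv ⟨hv, hcs, hsupp, hnorm⟩
  · simp only [poincare_eq_zero_of_not_exists_admissible h, limsup_const, le_refl]

/-- `limsup_{p→1⁺} λ_{p,q}(Ω) ≤ λ_{1,q}(Ω)`. -/
theorem statement_2 (N : ℕ) (Ω : Set (EuclideanSpace ℝ (Fin N))) (hΩ : IsOpen Ω)
    (q : ℝ) (hq : 0 < q) (hq' : q * ((N : ℝ) - 1) < N) :
    Filter.limsup (fun p : ℝ => poincare p q Ω) (nhdsWithin 1 (Set.Ioi 1))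
      ≤ poincare 1 q Ω :=
  statement_2_general N Ω q

end
end

section
/- Let a, b > 0 and c, d > 0, and for 0 < β < 1 define φ_β(t) = (a + t·b) / (c + t^β·d)^{1/β} for t > 0. Then for every t > 0 one has φ_β(t) ≥ ( (c^{1/β}/a)^{β/(1-β)} + (d^{1/β}/b)^{β/(1-β)} )^{(β-1)/β}, with equality if and only if t = ((a/c)·(d/b))^{1/(1-β)}. -/
/-!
With `A = (c^{1/β}/a)^{β/(1-β)}` and `B = (d^{1/β}/b)^{β/(1-β)}` one has `A^{1-β} = c/a^β` and
`B^{1-β} = d/b^β`, so `c + t^β d = a^β A^{1-β} + (tb)^β B^{1-β}`. By the two-term Hölder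
inequality (weighted AM-GM applied to the normalised pairs) this is at most
`(a + tb)^β (A + B)^{1-β}`, and taking `1/β`-th powers gives `φ_β(t) ≥ (A + B)^{(β-1)/β}`.
Equality in Hölder holds iff `(a, tb)` is proportional to `(A, B)`, i.e. `t = aB/(bA)`, and this
ratio equals `((a/c)(d/b))^{1/(1-β)}`.
-/

open MeasureTheory Set Filter
open scoped ENNReal

noncomputable section

open Real

section TwoTermHolder

variable {β s r x y u v : ℝ}

theorem rpow_mul_rpow_add_one_sub_le_one (hβ0 : 0 ≤ β) (hβ1 : β ≤ 1) (hs0 : 0 ≤ s) (hs1 : s ≤ 1)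
    (hr0 : 0 ≤ r) (hr1 : r ≤ 1) :
    s ^ β * r ^ (1 - β) + (1 - s) ^ β * (1 - r) ^ (1 - β) ≤ 1 := by
  have h₁ := geom_mean_le_arith_mean2_weighted hβ0 (sub_nonneg.2 hβ1) hs0 hr0 (add_sub_cancel β 1)
  have h₂ := geom_mean_le_arith_mean2_weighted hβ0 (sub_nonneg.2 hβ1) (sub_nonneg.2 hs1)
    (sub_nonneg.2 hr1) (add_sub_cancel β 1)
  linarith

theorem rpow_mul_rpow_add_one_sub_eq_one_iff (hβ0 : 0 < β) (hβ1 : β < 1) (hs0 : 0 ≤ s)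
    (hs1 : s ≤ 1) (hr0 : 0 ≤ r) (hr1 : r ≤ 1) :
    s ^ β * r ^ (1 - β) + (1 - s) ^ β * (1 - r) ^ (1 - β) = 1 ↔ s = r := by
  have hβ' : 0 < 1 - β := sub_pos.2 hβ1
  have h₂ := geom_mean_le_arith_mean2_weighted hβ0.le hβ'.le (sub_nonneg.2 hs1)
    (sub_nonneg.2 hr1) (add_sub_cancel β 1)
  constructor
  · intro h
    by_contra hsr
    have h₁ := (geom_mean_lt_arith_mean2_weighted_iff_of_pos hβ0 hβ' hs0 hr0
      (add_sub_cancel β 1)).2 hsr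
    linarith
  · rintro rfl
    have h₁ := (geom_mean_eq_arith_mean2_weighted_iff_of_pos hβ0 hβ' hs0 hs0
      (add_sub_cancel β 1)).2 rfl
    have h₂ := (geom_mean_eq_arith_mean2_weighted_iff_of_pos hβ0 hβ' (sub_nonneg.2 hs1)
      (sub_nonneg.2 hs1) (add_sub_cancel β 1)).2 rfl
    linear_combination h₁ + h₂

theorem rpow_mul_rpow_add_rpow_mul_rpow_eq_mul (hx : 0 ≤ x) (hy : 0 ≤ y) (hu : 0 ≤ u)
    (hv : 0 ≤ v) (hxy : 0 < x + y) (huv : 0 < u + v) :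
    x ^ β * u ^ (1 - β) + y ^ β * v ^ (1 - β) = (x + y) ^ β * (u + v) ^ (1 - β) *
      ((x / (x + y)) ^ β * (u / (u + v)) ^ (1 - β) +
        (1 - x / (x + y)) ^ β * (1 - u / (u + v)) ^ (1 - β)) := by
  rw [one_sub_div hxy.ne', one_sub_div huv.ne', add_sub_cancel_left, add_sub_cancel_left,
    div_rpow hx hxy.le, div_rpow hu huv.le, div_rpow hy hxy.le, div_rpow hv huv.le]
  have : 0 < (x + y) ^ β := by positivity
  have : 0 < (u + v) ^ (1 - β) := by positivity
  field_simp

theorem rpow_mul_rpow_add_rpow_mul_rpow_le (hβ0 : 0 ≤ β) (hβ1 : β ≤ 1) (hx : 0 ≤ x) (hy : 0 ≤ y)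
    (hu : 0 ≤ u) (hv : 0 ≤ v) (hxy : 0 < x + y) (huv : 0 < u + v) :
    x ^ β * u ^ (1 - β) + y ^ β * v ^ (1 - β) ≤ (x + y) ^ β * (u + v) ^ (1 - β) := by
  rw [rpow_mul_rpow_add_rpow_mul_rpow_eq_mul hx hy hu hv hxy huv]
  refine mul_le_of_le_one_right (by positivity) (rpow_mul_rpow_add_one_sub_le_one hβ0 hβ1
    (div_nonneg hx hxy.le) ?_ (div_nonneg hu huv.le) ?_)
  · exact div_le_one_of_le₀ (le_add_of_nonneg_right hy) hxy.le
  · exact div_le_one_of_le₀ (le_add_of_nonneg_right hv) huv.le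

theorem rpow_mul_rpow_add_rpow_mul_rpow_eq_iff (hβ0 : 0 < β) (hβ1 : β < 1) (hx : 0 ≤ x)
    (hy : 0 ≤ y) (hu : 0 ≤ u) (hv : 0 ≤ v) (hxy : 0 < x + y) (huv : 0 < u + v) :
    x ^ β * u ^ (1 - β) + y ^ β * v ^ (1 - β) = (x + y) ^ β * (u + v) ^ (1 - β) ↔
      x * v = y * u := by
  rw [rpow_mul_rpow_add_rpow_mul_rpow_eq_mul hx hy hu hv hxy huv, mul_eq_left₀ (by positivity),
    rpow_mul_rpow_add_one_sub_eq_one_iff hβ0 hβ1 (div_nonneg hx hxy.le)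
      (div_le_one_of_le₀ (le_add_of_nonneg_right hy) hxy.le) (div_nonneg hu huv.le)
      (div_le_one_of_le₀ (le_add_of_nonneg_right hv) huv.le),
    div_eq_div_iff hxy.ne' huv.ne']
  constructor <;> intro h <;> linarith

end TwoTermHolder

section RpowIdentities

variable {p q a c P S D : ℝ}

theorem rpow_one_div_div_rpow_div_rpow (hp : p ≠ 0) (hq : q ≠ 0) (ha : 0 ≤ a) (hc : 0 ≤ c) :
    ((c ^ (1 / p) / a) ^ (p / q)) ^ q = c / a ^ p := by
  rw [← rpow_mul (by positivity), div_mul_cancel₀ p hq, div_rpow (by positivity) ha,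
    ← rpow_mul hc, one_div_mul_cancel hp, rpow_one]

theorem div_rpow_one_div_rpow_mul_rpow (hp : p ≠ 0) (hP : 0 < P) (hS : 0 < S) :
    P / (P ^ p * S ^ (1 - p)) ^ (1 / p) = S ^ ((p - 1) / p) := by
  rw [mul_rpow (by positivity) (by positivity), ← rpow_mul hP.le, ← rpow_mul hS.le,
    mul_one_div_cancel hp, rpow_one, div_mul_cancel_left₀ hP.ne', ← rpow_neg hS.le]
  ring_nf

theorem rpow_le_div_rpow_one_div_iff (hp : 0 < p) (hP : 0 < P) (hS : 0 < S) (hD : 0 < D) :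
    S ^ ((p - 1) / p) ≤ P / D ^ (1 / p) ↔ D ≤ P ^ p * S ^ (1 - p) := by
  rw [← div_rpow_one_div_rpow_mul_rpow hp.ne' hP hS,
    div_le_div_iff_of_pos_left hP (by positivity) (by positivity),
    rpow_le_rpow_iff hD.le (by positivity) (by positivity)]

theorem div_rpow_one_div_eq_rpow_iff (hp : 0 < p) (hP : 0 < P) (hS : 0 < S) (hD : 0 < D) :
    P / D ^ (1 / p) = S ^ ((p - 1) / p) ↔ D = P ^ p * S ^ (1 - p) := by
  rw [← div_rpow_one_div_rpow_mul_rpow hp.ne' hP hS, div_eq_mul_inv P, div_eq_mul_inv P,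
    mul_right_inj' hP.ne', inv_inj, rpow_left_inj hD.le (by positivity) (by positivity)]

end RpowIdentities

theorem mul_div_mul_eq_rpow_one_div_one_sub {β a b c d A B : ℝ} (hβ1 : β < 1) (ha : 0 < a)
    (hb : 0 < b) (hA : 0 < A) (hB : 0 < B) (hAc : A ^ (1 - β) = c / a ^ β)
    (hBd : B ^ (1 - β) = d / b ^ β) :
    a * B / (b * A) = (a / c * (d / b)) ^ (1 / (1 - β)) := by
  have hβ : 1 - β ≠ 0 := (sub_pos.2 hβ1).ne'
  have h : (a * B / (b * A)) ^ (1 - β) = a / c * (d / b) := by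
    rw [div_rpow (by positivity) (by positivity), mul_rpow ha.le hB.le, mul_rpow hb.le hA.le,
      hAc, hBd, rpow_sub ha, rpow_sub hb, rpow_one, rpow_one]
    have : 0 < a ^ β := by positivity
    have : 0 < b ^ β := by positivity
    field_simp
  rw [← h, one_div, rpow_rpow_inv (by positivity) hβ]

/-- for `a, b, c, d > 0` and `0 < β < 1`, the function
`φ_β(t) = (a + t b)/(c + t^β d)^{1/β}` satisfies, for every `t > 0`,
`φ_β(t) ≥ ((c^{1/β}/a)^{β/(1-β)} + (d^{1/β}/b)^{β/(1-β)})^{(β-1)/β}`,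
with equality if and only if `t = ((a/c)(d/b))^{1/(1-β)}`. -/
theorem statement_5 (a b c d β : ℝ) (ha : 0 < a) (hb : 0 < b) (hc : 0 < c) (hd : 0 < d)
    (hβ0 : 0 < β) (hβ1 : β < 1) (t : ℝ) (ht : 0 < t) :
    ((c ^ (1 / β) / a) ^ (β / (1 - β)) + (d ^ (1 / β) / b) ^ (β / (1 - β))) ^ ((β - 1) / β)
        ≤ (a + t * b) / (c + t ^ β * d) ^ (1 / β) ∧
      ((a + t * b) / (c + t ^ β * d) ^ (1 / β) =
          ((c ^ (1 / β) / a) ^ (β / (1 - β)) + (d ^ (1 / β) / b) ^ (β / (1 - β))) ^ ((β - 1) / β)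
        ↔ t = (a / c * (d / b)) ^ (1 / (1 - β))) := by
  have hβ' : 1 - β ≠ 0 := (sub_pos.2 hβ1).ne'
  set A := (c ^ (1 / β) / a) ^ (β / (1 - β))
  set B := (d ^ (1 / β) / b) ^ (β / (1 - β))
  have hA : 0 < A := by positivity
  have hB : 0 < B := by positivity
  have hAc : A ^ (1 - β) = c / a ^ β := rpow_one_div_div_rpow_div_rpow hβ0.ne' hβ' ha.le hc.le
  have hBd : B ^ (1 - β) = d / b ^ β := rpow_one_div_div_rpow_div_rpow hβ0.ne' hβ' hb.le hd.le
  have hsplit : c + t ^ β * d = a ^ β * A ^ (1 - β) + (t * b) ^ β * B ^ (1 - β) := by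
    have : 0 < a ^ β := by positivity
    have : 0 < b ^ β := by positivity
    rw [hAc, hBd, mul_rpow ht.le hb.le]
    field_simp
  have hpos : 0 < c + t ^ β * d := by positivity
  refine ⟨(rpow_le_div_rpow_one_div_iff hβ0 (by positivity) (by positivity) hpos).2 ?_, ?_⟩
  · rw [hsplit]
    exact rpow_mul_rpow_add_rpow_mul_rpow_le hβ0.le hβ1.le ha.le (by positivity) hA.le hB.le
      (by positivity) (by positivity)
  · rw [div_rpow_one_div_eq_rpow_iff hβ0 (by positivity) (by positivity) hpos, hsplit,
      rpow_mul_rpow_add_rpow_mul_rpow_eq_iff hβ0 hβ1 ha.le (by positivity) hA.le hB.le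
        (by positivity) (by positivity),
      ← mul_div_mul_eq_rpow_one_div_one_sub hβ1 ha hb hA hB hAc hBd,
      eq_div_iff (by positivity)]
    constructor <;> intro h <;> linarith

end
end

section
/- Let Ω ⊆ ℝ² be an unbounded open convex set with finite inradius r_Ω < ∞ and nonempty high ridge set M(Ω) ≠ ∅. Then, up to a rigid motion of the plane, one has [0, ∞) × (-r_Ω, r_Ω) ⊆ Ω ⊆ ℝ × (-r_Ω, r_Ω). -/
open MeasureTheory Set Filter
open scoped ENNReal

noncomputable section

/-!
Fix `x₀` in the high ridge set and put `r = r_Ω`. Being convex and unbounded, `Ω` has a recession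
direction `v`: the ray `x₀ + ℝ₊ v` lies in `closure Ω`, so `Ω + ℝ₊ v ⊆ Ω` and `Ω` contains the
half-strip swept out by `B_r(x₀)`. If a point `y ∈ Ω` stood at height `h > r` over the axis of
that half-strip, then, far out in the direction `v`, the segments joining the axis to the ray
`y + ℝ₊ v` would fill a slab of width `r + h > 2 r`, so `Ω` would contain a ball of radius
`> r`. Hence `Ω` lies in the strip of half-width `r` around the axis, strictly since `Ω` is open.
-/

open scoped RealInnerProductSpace Topology
open Metric

section Convex

variable {E : Type*} [NormedAddCommGroup E] [NormedSpace ℝ E]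

theorem IsOpen.exists_pos_add_smul_mem {U : Set E} (hU : IsOpen U) {y : E} (hy : y ∈ U) (u : E) :
    ∃ ε : ℝ, 0 < ε ∧ y + ε • u ∈ U := by
  have hcont : Tendsto (fun ε : ℝ => y + ε • u) (𝓝 0) (𝓝 y) := by
    simpa using ((tendsto_id (x := 𝓝 (0 : ℝ))).smul_const u).const_add y
  have hev : ∀ᶠ ε in 𝓝[>] (0 : ℝ), y + ε • u ∈ U :=
    nhdsWithin_le_nhds (hcont.eventually (hU.mem_nhds hy))
  obtain ⟨ε, hmem, hpos⟩ := (hev.and self_mem_nhdsWithin).exists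
  exact ⟨ε, hpos, hmem⟩

theorem Convex.add_smul_mem_interior_of_forall_mem_closure {s : Set E} (hs : Convex ℝ s)
    {x v : E} (hray : ∀ t : ℝ, 0 ≤ t → x + t • v ∈ closure s) {y : E} (hy : y ∈ interior s)
    {t : ℝ} (ht : 0 ≤ t) : y + t • v ∈ interior s := by
  obtain ⟨c, hc, hyc⟩ := isOpen_interior.exists_pos_add_smul_mem hy (y - x)
  have hcombo : (1 + c)⁻¹ • (y + c • (y - x)) + (c / (1 + c)) • (x + (t * (1 + c) / c) • v)
      = y + t • v := by
    match_scalars <;> field_simp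
    ring
  rw [← hcombo]
  exact hs.combo_interior_closure_mem_interior hyc (hray _ (by positivity)) (by positivity)
    (by positivity) (by field_simp)

theorem Convex.exists_norm_eq_one_forall_add_smul_mem_closure [ProperSpace E] {s : Set E}
    (hs : Convex ℝ s) (hunb : ¬Bornology.IsBounded s) {x : E} (hx : x ∈ s) :
    ∃ v : E, ‖v‖ = 1 ∧ ∀ t : ℝ, 0 ≤ t → x + t • v ∈ closure s := by
  have hfar : ∀ n : ℕ, ∃ y ∈ s, (n : ℝ) < dist y x := by
    intro n
    by_contra! h
    exact hunb ((isBounded_iff_subset_closedBall x).2 ⟨n, fun y hy => h y hy⟩)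
  choose y hys hyd using hfar
  have hd : ∀ n, 0 < dist (y n) x := fun n => (Nat.cast_nonneg n).trans_lt (hyd n)
  obtain ⟨v, hv, φ, hφ, hlim⟩ := (isCompact_sphere (0 : E) 1).tendsto_subseq
    (x := fun n => (dist (y n) x)⁻¹ • (y n - x)) fun n => by
      rw [mem_sphere_zero_iff_norm, norm_smul, norm_inv, Real.norm_of_nonneg dist_nonneg,
        ← dist_eq_norm, inv_mul_cancel₀ (hd n).ne']
  refine ⟨v, mem_sphere_zero_iff_norm.1 hv, fun t ht => ?_⟩
  have hdist : Tendsto (fun n => dist (y (φ n)) x) atTop atTop :=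
    tendsto_atTop_mono (fun n => (hyd (φ n)).le)
      (tendsto_natCast_atTop_atTop.comp hφ.tendsto_atTop)
  refine mem_closure_of_tendsto ((hlim.const_smul t).const_add x) ?_
  filter_upwards [hdist.eventually_ge_atTop t] with n hn
  rw [Function.comp_apply, smul_smul, ← div_eq_mul_inv]
  exact hs.add_smul_sub_mem hx (hys _) ⟨by positivity, div_le_one_of_le₀ hn dist_nonneg⟩

end Convex

theorem OrthonormalBasis.exists_apply_eq {ι F : Type*} [Fintype ι] [NormedAddCommGroup F]
    [InnerProductSpace ℝ F] (b₀ : OrthonormalBasis ι ℝ F) (i : ι) {v : F} (hv : ‖v‖ = 1) :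
    ∃ b : OrthonormalBasis ι ℝ F, b i = v :=
  ⟨b₀.map (ℝ ∙ (b₀ i - v))ᗮ.reflection,
    by simpa using Submodule.reflection_sub (by rw [b₀.norm_eq_one, hv])⟩

theorem le_inradius_of_ball_subset {N : ℕ} {Ω : Set (EuclideanSpace ℝ (Fin N))}
    (hfin : einradius Ω < ⊤) {c : EuclideanSpace ℝ (Fin N)} {ρ : ℝ}
    (h : ball c ρ ⊆ Ω) : ρ ≤ inradius Ω := by
  rcases le_or_gt ρ 0 with hρ | hρ
  · exact hρ.trans ENNReal.toReal_nonneg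
  have hdist : ENNReal.ofReal ρ ≤ Metric.infEDist c Ωᶜ :=
    Metric.le_infEDist.2 fun z hz => by
      rw [edist_dist]
      exact ENNReal.ofReal_le_ofReal (not_lt.1 fun hlt => hz (h (mem_ball'.2 hlt)))
  have hle : ENNReal.ofReal ρ ≤ einradius Ω :=
    hdist.trans (le_biSup (fun x => Metric.infEDist x Ωᶜ) (h (mem_ball_self hρ)))
  simpa [inradius, ENNReal.toReal_ofReal hρ.le] using ENNReal.toReal_mono hfin.ne hle

section Strip

variable {E : Type*} [NormedAddCommGroup E] [InnerProductSpace ℝ E]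
  {s : Set E} {x₀ v w : E} {r : ℝ}

theorem abs_inner_sub_inner_lt_of_mem_ball {u c p : E} {R : ℝ} (hu : ‖u‖ = 1)
    (hp : p ∈ ball c R) (x : E) : |⟪u, p - x⟫ - ⟪u, c - x⟫| < R := by
  rw [← inner_sub_right, sub_sub_sub_cancel_right]
  refine (abs_real_inner_le_norm u _).trans_lt ?_
  rwa [hu, one_mul, ← dist_eq_norm]

theorem Convex.add_smul_add_smul_mem_of_lt (hs : Convex ℝ s) (hx₀ : x₀ ∈ s)
    (hball : ball x₀ r ⊆ s) (hrec : ∀ y ∈ s, ∀ t : ℝ, 0 ≤ t → y + t • v ∈ s) (hw : ‖w‖ = 1)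
    {a h : ℝ} (hy : x₀ + a • v + h • w ∈ s) {α β : ℝ} (hα : 0 ≤ α) (haα : a ≤ α)
    (hrβ : -r < β) (hβh : β < h) : x₀ + α • v + β • w ∈ s := by
  rcases lt_or_ge β 0 with hβ | hβ
  · rw [add_right_comm]
    refine hrec _ (hball ?_) α hα
    rw [mem_ball, dist_eq_norm, add_sub_cancel_left, norm_smul, hw, mul_one, Real.norm_eq_abs,
      abs_lt]
    constructor <;> linarith
  · have hh : 0 < h := by linarith
    have hcombo : (1 - β / h) • (x₀ + α • v) + (β / h) • (x₀ + a • v + h • w + (α - a) • v)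
        = x₀ + α • v + β • w := by
      match_scalars <;> field_simp <;> ring
    rw [← hcombo]
    exact hs (hrec x₀ hx₀ α hα) (hrec _ hy _ (sub_nonneg.2 haα))
      (sub_nonneg.2 ((div_le_one hh).2 hβh.le)) (div_nonneg hβ hh.le) (by ring)

theorem Convex.inner_sub_le_of_radius_le (hs : Convex ℝ s) (hx₀ : x₀ ∈ s)
    (hball : ball x₀ r ⊆ s) (hrec : ∀ y ∈ s, ∀ t : ℝ, 0 ≤ t → y + t • v ∈ s)
    (hmax : ∀ c ρ, ball c ρ ⊆ s → ρ ≤ r) (hv : ‖v‖ = 1) (hw : ‖w‖ = 1) (hvw : ⟪v, w⟫ = 0)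
    (hspan : ∀ z, ⟪v, z⟫ • v + ⟪w, z⟫ • w = z) {y : E} (hy : y ∈ s) :
    ⟪w, y - x₀⟫ ≤ r := by
  have hcoord (z : E) : x₀ + ⟪v, z - x₀⟫ • v + ⟪w, z - x₀⟫ • w = z := by
    rw [add_assoc, hspan, add_sub_cancel]
  by_contra! hlt
  set a := ⟪v, y - x₀⟫
  set h := ⟪w, y - x₀⟫
  -- `ball c R` is inscribed in the slab `-r < β < h`, far enough out along `v`
  set R := (r + h) / 2 with hR
  set A := max 0 a + R with hA
  set c := x₀ + A • v + ((h - r) / 2) • w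
  have hc : c - x₀ = A • v + ((h - r) / 2) • w := by simp only [c]; abel
  have hvc : ⟪v, c - x₀⟫ = A := by
    simp [hc, inner_add_right, real_inner_smul_right, hv, hvw]
  have hwc : ⟪w, c - x₀⟫ = (h - r) / 2 := by
    simp [hc, inner_add_right, real_inner_smul_right, hw, real_inner_comm v w, hvw]
  refine absurd (hmax c R fun p hp => ?_) (by linarith)
  have hα := abs_lt.1 (hvc ▸ abs_inner_sub_inner_lt_of_mem_ball hv hp x₀)
  have hβ := abs_lt.1 (hwc ▸ abs_inner_sub_inner_lt_of_mem_ball hw hp x₀)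
  rw [← hcoord p]
  refine hs.add_smul_add_smul_mem_of_lt hx₀ hball hrec hw (hcoord y ▸ hy) ?_ ?_ ?_ ?_ <;>
    linarith [le_max_left 0 a, le_max_right 0 a]

theorem IsOpen.inner_sub_lt_of_radius_le (hso : IsOpen s) (hs : Convex ℝ s) (hx₀ : x₀ ∈ s)
    (hball : ball x₀ r ⊆ s) (hrec : ∀ y ∈ s, ∀ t : ℝ, 0 ≤ t → y + t • v ∈ s)
    (hmax : ∀ c ρ, ball c ρ ⊆ s → ρ ≤ r) (hv : ‖v‖ = 1) (hw : ‖w‖ = 1) (hvw : ⟪v, w⟫ = 0)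
    (hspan : ∀ z, ⟪v, z⟫ • v + ⟪w, z⟫ • w = z) {y : E} (hy : y ∈ s) :
    ⟪w, y - x₀⟫ < r := by
  obtain ⟨ε, hε, hyε⟩ := hso.exists_pos_add_smul_mem hy w
  have := hs.inner_sub_le_of_radius_le hx₀ hball hrec hmax hv hw hvw hspan hyε
  rw [add_sub_right_comm, inner_add_right, real_inner_smul_right, real_inner_self_eq_norm_sq,
    hw] at this
  linarith

theorem IsOpen.abs_inner_sub_lt_of_radius_le (hso : IsOpen s) (hs : Convex ℝ s) (hx₀ : x₀ ∈ s)
    (hball : ball x₀ r ⊆ s) (b : OrthonormalBasis (Fin 2) ℝ E)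
    (hrec : ∀ y ∈ s, ∀ t : ℝ, 0 ≤ t → y + t • b 0 ∈ s) (hmax : ∀ c ρ, ball c ρ ⊆ s → ρ ≤ r)
    {y : E} (hy : y ∈ s) : |⟪b 1, y - x₀⟫| < r := by
  have hw : ‖b 1‖ = 1 := b.norm_eq_one 1
  have hvw : ⟪b 0, b 1⟫ = 0 := b.orthonormal.2 (by decide)
  have hspan (z : E) : ⟪b 0, z⟫ • b 0 + ⟪b 1, z⟫ • b 1 = z := by
    simpa [Fin.sum_univ_two] using b.sum_repr' z
  have hlower := hso.inner_sub_lt_of_radius_le hs hx₀ hball hrec hmax (b.norm_eq_one 0)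
    (norm_neg (b 1) ▸ hw) (by rw [inner_neg_right, hvw, neg_zero]) (by simpa using hspan) hy
  rw [inner_neg_left] at hlower
  exact abs_lt.2 ⟨by linarith,
    hso.inner_sub_lt_of_radius_le hs hx₀ hball hrec hmax (b.norm_eq_one 0) hw hvw hspan hy⟩

end Strip

/-- an unbounded open convex set `Ω ⊆ ℝ²` with finite inradius and
nonempty high ridge set satisfies, up to a rigid motion,
`[0,∞) × (-r_Ω, r_Ω) ⊆ Ω ⊆ ℝ × (-r_Ω, r_Ω)`. -/
theorem statement_14 (Ω : Set (EuclideanSpace ℝ (Fin 2)))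
    (hΩ : IsOpen Ω) (hconv : Convex ℝ Ω) (hunb : ¬ Bornology.IsBounded Ω)
    (hfin : einradius Ω < ⊤) (hM : (highRidge Ω).Nonempty) :
    ∃ g : EuclideanSpace ℝ (Fin 2) ≃ᵃⁱ[ℝ] EuclideanSpace ℝ (Fin 2),
      {p : EuclideanSpace ℝ (Fin 2) |
          0 ≤ p 0 ∧ p 1 ∈ Set.Ioo (-(inradius Ω)) (inradius Ω)} ⊆ g '' Ω ∧
      g '' Ω ⊆ {p : EuclideanSpace ℝ (Fin 2) | p 1 ∈ Set.Ioo (-(inradius Ω)) (inradius Ω)} := by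
  obtain ⟨x₀, hx₀, hball⟩ := hM
  have hmax : ∀ c ρ, ball c ρ ⊆ Ω → ρ ≤ inradius Ω := fun _ _ => le_inradius_of_ball_subset hfin
  obtain ⟨v, hv, hray⟩ := hconv.exists_norm_eq_one_forall_add_smul_mem_closure hunb hx₀
  have hrec : ∀ y ∈ Ω, ∀ t : ℝ, 0 ≤ t → y + t • v ∈ Ω := fun y hy t ht => by
    simpa only [hΩ.interior_eq] using
      hconv.add_smul_mem_interior_of_forall_mem_closure hray (hΩ.interior_eq.symm ▸ hy) ht
  obtain ⟨b, rfl⟩ := (EuclideanSpace.basisFun (Fin 2) ℝ).exists_apply_eq 0 hv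
  have hstrip (y) (hy : y ∈ Ω) : |⟪b 1, y - x₀⟫| < inradius Ω :=
    hΩ.abs_inner_sub_lt_of_radius_le hconv hx₀ hball b hrec hmax hy
  refine ⟨(AffineIsometryEquiv.constVAdd ℝ _ (-x₀)).trans b.repr.toAffineIsometryEquiv, ?_, ?_⟩
  · rintro p ⟨hp0, hp1⟩
    refine ⟨x₀ + p 1 • b 1 + p 0 • b 0, hrec _ (hball ?_) _ hp0, ?_⟩
    · rw [mem_ball, dist_eq_norm, add_sub_cancel_left, norm_smul, b.norm_eq_one, mul_one,
        Real.norm_eq_abs]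
      exact abs_lt.2 hp1
    · show b.repr (-x₀ +ᵥ (x₀ + p 1 • b 1 + p 0 • b 0)) = p
      ext i
      fin_cases i <;> simp [b.repr_self]
  · rintro _ ⟨y, hy, rfl⟩
    show b.repr (-x₀ +ᵥ y) 1 ∈ Ioo (-inradius Ω) (inradius Ω)
    rw [b.repr_apply_apply, vadd_eq_add, neg_add_eq_sub]
    exact abs_lt.1 (hstrip y hy)

end
end

section
/- Let Ω ⊆ ℝ² be an unbounded open convex set with finite inradius r_Ω < ∞. Then for every 0 < q < 1 one has h_q(Ω) = 0. -/
open MeasureTheory Set Filter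
open scoped ENNReal

noncomputable section

/-! An unbounded convex set `Ω` contains in its closure a ray `x₀ + t v`, `t ≥ 0`; since `Ω` is
open it also contains a ball `B(x₀, ρ)`, and convexity then puts the whole half-strip of width
`ρ / 2` around the ray inside `Ω`. The ellipses centred at `x₀ + a v` with semi-axes `a` along `v`
and `ρ / 4` across fit in that half-strip. Their perimeter is at most `2π (a + ρ / 4)` and their
area at least `a ρ / 4`, so their Cheeger ratio is `O(a ^ (1 - 1 / q))`, which tends to `0` as
`a → ∞` because `q < 1`. -/

open scoped RealInnerProductSpace Topology
open Real

local notation "ℝ²" => EuclideanSpace ℝ (Fin 2)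

theorem OrthonormalBasis.sum_repr'_fin_two {F : Type*} [NormedAddCommGroup F]
    [InnerProductSpace ℝ F] (e : OrthonormalBasis (Fin 2) ℝ F) (x : F) :
    ⟪e 0, x⟫ • e 0 + ⟪e 1, x⟫ • e 1 = x := by
  simpa [Fin.sum_univ_two] using e.sum_repr' x

theorem exists_orthonormalBasis_apply_zero_eq {F : Type*} [NormedAddCommGroup F]
    [InnerProductSpace ℝ F] {n : ℕ} (hn : Module.finrank ℝ F = n + 1) {v : F} (hv : ‖v‖ = 1) :
    ∃ e : OrthonormalBasis (Fin (n + 1)) ℝ F, e 0 = v := by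
  have := Module.finite_of_finrank_eq_succ hn
  have hv' : Orthonormal ℝ (({0} : Set (Fin (n + 1))).domRestrict fun _ => v) := by
    rw [orthonormal_iff_ite]
    rintro ⟨i, rfl⟩ ⟨j, rfl⟩
    simp [hv]
  obtain ⟨e, he⟩ := hv'.exists_orthonormalBasis_extension_of_card_eq (by simpa using hn)
  exact ⟨e, he 0 rfl⟩

theorem hasFDerivAt_inner_sub {F : Type*} [NormedAddCommGroup F] [InnerProductSpace ℝ F]
    (u c p : F) : HasFDerivAt (fun p : F => ⟪u, p - c⟫) (innerSL ℝ u) p :=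
  (innerSL ℝ u).hasFDerivAt.comp p ((hasFDerivAt_id p).sub_const c)

section ConvexRay

variable {E : Type*} [NormedAddCommGroup E] [NormedSpace ℝ E] {Ω : Set E}

theorem Convex.exists_ray_subset_closure [ProperSpace E] (hconv : Convex ℝ Ω)
    (hunb : ¬ Bornology.IsBounded Ω) {x₀ : E} (hx₀ : x₀ ∈ Ω) :
    ∃ v : E, ‖v‖ = 1 ∧ ∀ t : ℝ, 0 ≤ t → x₀ + t • v ∈ closure Ω := by
  have hfar (n : ℕ) : ∃ y ∈ Ω, (n : ℝ) < ‖y - x₀‖ := by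
    by_contra! h
    exact hunb ((Metric.isBounded_iff_subset_closedBall x₀).mpr
      ⟨n, fun y hy => by simpa [dist_eq_norm] using h y hy⟩)
  choose y hyΩ hy using hfar
  have hr (n : ℕ) : 0 < ‖y n - x₀‖ := (Nat.cast_nonneg n).trans_lt (hy n)
  -- a limit direction of the far points `y n` seen from `x₀`
  set u : ℕ → E := fun n => ‖y n - x₀‖⁻¹ • (y n - x₀)
  have hu (n : ℕ) : u n ∈ Metric.sphere (0 : E) 1 := by
    simp [u, norm_smul, (hr n).ne']
  obtain ⟨v, hv, φ, hφ, hlim⟩ := (isCompact_sphere (0 : E) 1).tendsto_subseq hu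
  refine ⟨v, mem_sphere_zero_iff_norm.mp hv, fun t ht => ?_⟩
  refine mem_closure_of_tendsto (tendsto_const_nhds.add (hlim.const_smul t)) ?_
  filter_upwards [eventually_ge_atTop ⌈t⌉₊] with n hn
  have htn : t ≤ ‖y (φ n) - x₀‖ := calc
    t ≤ n := (Nat.le_ceil t).trans (by exact_mod_cast hn)
    _ ≤ φ n := by exact_mod_cast hφ.le_apply
    _ ≤ ‖y (φ n) - x₀‖ := (hy (φ n)).le
  have hmem := hconv.add_smul_mem hx₀ (y := y (φ n) - x₀) (by simpa using hyΩ (φ n))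
    ⟨div_nonneg ht (hr _).le, div_le_one_of_le₀ htn (hr _).le⟩
  simpa [u, smul_smul, div_eq_mul_inv] using hmem

theorem Convex.add_smul_add_mem_of_ball_subset (hconv : Convex ℝ Ω) {x₀ v u : E} {ρ s : ℝ}
    (hball : Metric.ball x₀ ρ ⊆ Ω) (hray : ∀ t : ℝ, 0 ≤ t → x₀ + t • v ∈ closure Ω)
    (hs : 0 ≤ s) (hu : ‖u‖ < ρ / 2) : x₀ + s • v + u ∈ Ω := by
  -- the midpoint of an interior point `x₀ + 2u` and a closure point `x₀ + 2s v`
  have hint : x₀ + (2 : ℝ) • u ∈ interior Ω :=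
    interior_maximal hball Metric.isOpen_ball <| by
      simp only [Metric.mem_ball, dist_self_add_left, norm_smul, Real.norm_ofNat]
      linarith
  have hmid := hconv.combo_interior_closure_mem_interior hint (hray (2 * s) (by positivity))
    (by norm_num : (0 : ℝ) < 1 / 2) (by norm_num : (0 : ℝ) ≤ 1 / 2) (by norm_num)
  convert interior_subset hmid using 1
  module

end ConvexRay

section Ellipse

def ellipseFun (e : OrthonormalBasis (Fin 2) ℝ ℝ²) (c : ℝ²) (a b : ℝ) (p : ℝ²) : ℝ :=
  b ^ 2 * ⟪e 0, p - c⟫ ^ 2 + a ^ 2 * ⟪e 1, p - c⟫ ^ 2 - a ^ 2 * b ^ 2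

/-- The open ellipse with centre `c` and semi-axes `a`, `b` along `e 0`, `e 1`. -/
def ellipse (e : OrthonormalBasis (Fin 2) ℝ ℝ²) (c : ℝ²) (a b : ℝ) : Set ℝ² :=
  {p | ellipseFun e c a b p < 0}

def ellipseParam (e : OrthonormalBasis (Fin 2) ℝ ℝ²) (c : ℝ²) (a b θ : ℝ) : ℝ² :=
  c + (a * cos θ) • e 0 + (b * sin θ) • e 1

variable (e : OrthonormalBasis (Fin 2) ℝ ℝ²) (c : ℝ²) {a b : ℝ}

theorem hasFDerivAt_ellipseFun (a b : ℝ) (p : ℝ²) :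
    HasFDerivAt (ellipseFun e c a b)
      ((2 * b ^ 2 * ⟪e 0, p - c⟫) • innerSL ℝ (e 0)
        + (2 * a ^ 2 * ⟪e 1, p - c⟫) • innerSL ℝ (e 1)) p := by
  have h := ((((hasFDerivAt_inner_sub (e 0) c p).pow 2).const_mul (b ^ 2)).add
    (((hasFDerivAt_inner_sub (e 1) c p).pow 2).const_mul (a ^ 2))).sub_const (a ^ 2 * b ^ 2)
  refine h.congr_fderiv ?_
  ext u
  simp only [add_apply, smul_apply, coe_innerSL_apply, smul_eq_mul]
  ring

theorem contDiff_ellipseFun (a b : ℝ) : ContDiff ℝ (⊤ : ℕ∞) (ellipseFun e c a b) := by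
  have h (u : ℝ²) : ContDiff ℝ (⊤ : ℕ∞) fun p : ℝ² => ⟪u, p - c⟫ :=
    contDiff_const.inner ℝ (contDiff_id.sub contDiff_const)
  unfold ellipseFun
  fun_prop

theorem fderiv_ellipseFun_ne_zero (ha : 0 < a) (hb : 0 < b) {p : ℝ²} (hp : p ≠ c) :
    fderiv ℝ (ellipseFun e c a b) p ≠ 0 := by
  rw [(hasFDerivAt_ellipseFun e c a b p).fderiv]
  intro h
  have h0 : ⟪e 0, p - c⟫ = 0 := by
    simpa [ha.ne', hb.ne'] using congrArg (fun L : ℝ² →L[ℝ] ℝ => L (e 0)) h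
  have h1 : ⟪e 1, p - c⟫ = 0 := by
    simpa [ha.ne', hb.ne'] using congrArg (fun L : ℝ² →L[ℝ] ℝ => L (e 1)) h
  exact hp (sub_eq_zero.mp (by simpa [h0, h1] using (e.sum_repr'_fin_two (p - c)).symm))

theorem isOpen_ellipse (a b : ℝ) : IsOpen (ellipse e c a b) :=
  isOpen_lt (contDiff_ellipseFun e c a b).continuous continuous_const

theorem center_mem_ellipse (ha : 0 < a) (hb : 0 < b) : c ∈ ellipse e c a b := by
  simp only [ellipse, ellipseFun, Set.mem_ofPred_eq, sub_self, inner_zero_right]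
  nlinarith [mul_pos (pow_pos ha 2) (pow_pos hb 2)]

theorem ellipseFun_nonpos_of_mem_closure (a b : ℝ) {p : ℝ²} (hp : p ∈ closure (ellipse e c a b)) :
    ellipseFun e c a b p ≤ 0 :=
  closure_lt_subset_le (contDiff_ellipseFun e c a b).continuous continuous_const hp

theorem ellipseFun_eq_zero_of_mem_frontier (a b : ℝ) {p : ℝ²}
    (hp : p ∈ frontier (ellipse e c a b)) : ellipseFun e c a b p = 0 :=
  frontier_lt_subset_eq (contDiff_ellipseFun e c a b).continuous continuous_const hp

theorem abs_inner_le_of_ellipseFun_nonpos (ha : 0 < a) (hb : 0 < b) {p : ℝ²}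
    (hp : ellipseFun e c a b p ≤ 0) : |⟪e 0, p - c⟫| ≤ a ∧ |⟪e 1, p - c⟫| ≤ b := by
  unfold ellipseFun at hp
  constructor <;> refine abs_le_of_sq_le_sq ?_ (by positivity)
  · nlinarith [mul_nonneg (sq_nonneg a) (sq_nonneg ⟪e 1, p - c⟫), pow_pos hb 2]
  · nlinarith [mul_nonneg (sq_nonneg b) (sq_nonneg ⟪e 0, p - c⟫), pow_pos ha 2]

theorem isCompact_closure_ellipse (ha : 0 < a) (hb : 0 < b) :
    IsCompact (closure (ellipse e c a b)) := by
  refine (isCompact_closedBall c (a + b)).of_isClosed_subset isClosed_closure fun p hp => ?_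
  obtain ⟨h0, h1⟩ :=
    abs_inner_le_of_ellipseFun_nonpos e c ha hb (ellipseFun_nonpos_of_mem_closure e c a b hp)
  rw [Metric.mem_closedBall, dist_eq_norm, ← e.sum_repr'_fin_two (p - c)]
  refine (norm_add_le _ _).trans ?_
  simpa [norm_smul] using add_le_add h0 h1

theorem hasSmoothBoundary_ellipse (ha : 0 < a) (hb : 0 < b) :
    HasSmoothBoundary (ellipse e c a b) := by
  intro p hp
  have hpc : p ≠ c := by
    rintro rfl
    rw [(isOpen_ellipse e p a b).frontier_eq] at hp
    exact hp.2 (center_mem_ellipse e p ha hb)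
  exact ⟨{c}ᶜ, isOpen_compl_singleton, hpc, ellipseFun e c a b, contDiff_ellipseFun e c a b,
    fun _ _ => Iff.rfl, fun _ hq => fderiv_ellipseFun_ne_zero e c ha hb hq⟩

theorem frontier_ellipse_subset_image_ellipseParam (ha : 0 < a) (hb : 0 < b) :
    frontier (ellipse e c a b) ⊆ ellipseParam e c a b '' Set.Icc (-π) π := by
  intro p hp
  have hp := ellipseFun_eq_zero_of_mem_frontier e c a b hp
  set x := ⟪e 0, p - c⟫ / a
  set y := ⟪e 1, p - c⟫ / b
  have hxy : x ^ 2 + y ^ 2 = 1 := by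
    unfold ellipseFun at hp
    simp only [x, y]
    field_simp
    linarith
  have hx : x ∈ Set.Icc (-1) 1 := abs_le.mp (abs_le_of_sq_le_sq (by nlinarith) zero_le_one)
  have hsqrt : √(1 - x ^ 2) = |y| := by rw [← Real.sqrt_sq_eq_abs]; congr 1; linarith
  refine ⟨if 0 ≤ y then arccos x else -arccos x, ?_, ?_⟩
  · have := arccos_nonneg x
    have := arccos_le_pi x
    split_ifs <;> constructor <;> linarith [pi_pos]
  · have hcos : cos (if 0 ≤ y then arccos x else -arccos x) = x := by
      split_ifs <;> simp [cos_arccos hx.1 hx.2]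
    have hsin : sin (if 0 ≤ y then arccos x else -arccos x) = y := by
      split_ifs with h
      · rw [sin_arccos, hsqrt, abs_of_nonneg h]
      · rw [sin_neg, sin_arccos, hsqrt, abs_of_neg (not_le.mp h), neg_neg]
    rw [ellipseParam, hcos, hsin, mul_div_cancel₀ _ ha.ne', mul_div_cancel₀ _ hb.ne', add_assoc,
      e.sum_repr'_fin_two, add_sub_cancel]

theorem hasDerivAt_ellipseParam (a b θ : ℝ) :
    HasDerivAt (ellipseParam e c a b) ((a * -sin θ) • e 0 + (b * cos θ) • e 1) θ := by
  have h := ((((hasDerivAt_cos θ).const_mul a).smul_const (e 0)).add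
    (((hasDerivAt_sin θ).const_mul b).smul_const (e 1))).const_add c
  exact h.congr_of_eventuallyEq (.of_forall fun θ => by simp [ellipseParam, add_assoc])

theorem lipschitzWith_ellipseParam (ha : 0 < a) (hb : 0 < b) :
    LipschitzWith (a + b).toNNReal (ellipseParam e c a b) := by
  refine lipschitzWith_of_nnnorm_deriv_le
    (fun θ => (hasDerivAt_ellipseParam e c a b θ).differentiableAt) fun θ => ?_
  rw [(hasDerivAt_ellipseParam e c a b θ).deriv, ← NNReal.coe_le_coe, coe_nnnorm,
    Real.coe_toNNReal _ (by positivity)]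
  refine (norm_add_le _ _).trans (add_le_add ?_ ?_)
  · simpa [norm_smul, abs_of_pos ha] using mul_le_of_le_one_right ha.le (abs_sin_le_one θ)
  · simpa [norm_smul, abs_of_pos hb] using mul_le_of_le_one_right hb.le (abs_cos_le_one θ)

theorem hausdorffMeasure_frontier_ellipse_le (ha : 0 < a) (hb : 0 < b) :
    μH[1] (frontier (ellipse e c a b)) ≤ ENNReal.ofReal (2 * π * (a + b)) :=
  calc μH[1] (frontier (ellipse e c a b))
      ≤ μH[1] (ellipseParam e c a b '' Set.Icc (-π) π) :=
        measure_mono (frontier_ellipse_subset_image_ellipseParam e c ha hb)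
    _ ≤ (a + b).toNNReal ^ (1 : ℝ) * μH[1] (Set.Icc (-π) π) :=
        (lipschitzWith_ellipseParam e c ha hb).hausdorffMeasure_image_le zero_le_one _
    _ = ENNReal.ofReal (2 * π * (a + b)) := by
        rw [hausdorffMeasure_real, Real.volume_Icc, ENNReal.rpow_one, mul_comm]
        rw [← ENNReal.ofReal, ← ENNReal.ofReal_mul (by linarith [pi_pos])]
        ring_nf

theorem ofReal_mul_le_volume_ellipse (ha : 0 < a) (hb : 0 < b) :
    ENNReal.ofReal (a * b) ≤ volume (ellipse e c a b) := by
  -- the ellipse contains the rectangle `(-a/2, a/2) × (-b/2, b/2)` in the frame `(c, e)`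
  set T : (Fin 2 → ℝ) → ℝ² := fun x => c + e.repr.symm (WithLp.toLp 2 x)
  have hT : MeasurePreserving T := (measurePreserving_add_left volume c).comp
    (e.measurePreserving_repr_symm.comp (PiLp.volume_preserving_toLp (Fin 2)))
  have hrect : Set.univ.pi (fun i => Set.Ioo (-![a / 2, b / 2] i) (![a / 2, b / 2] i)) ⊆
      T ⁻¹' ellipse e c a b := by
    intro x hx
    have h0 := abs_lt.mpr (hx 0 (Set.mem_univ _))
    have h1 := abs_lt.mpr (hx 1 (Set.mem_univ _))
    simp only [Matrix.cons_val_zero, Matrix.cons_val_one] at h0 h1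
    have h0' : x 0 ^ 2 < (a / 2) ^ 2 := sq_lt_sq' (abs_lt.mp h0).1 (abs_lt.mp h0).2
    have h1' : x 1 ^ 2 < (b / 2) ^ 2 := sq_lt_sq' (abs_lt.mp h1).1 (abs_lt.mp h1).2
    show ellipseFun e c a b (T x) < 0
    simp only [ellipseFun, T, add_sub_cancel_left, ← OrthonormalBasis.repr_apply_apply,
      LinearIsometryEquiv.apply_symm_apply, PiLp.toLp_apply]
    nlinarith [mul_lt_mul_of_pos_left h0' (pow_pos hb 2),
      mul_lt_mul_of_pos_left h1' (pow_pos ha 2)]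
  calc ENNReal.ofReal (a * b)
      = volume (Set.univ.pi fun i => Set.Ioo (-![a / 2, b / 2] i) (![a / 2, b / 2] i)) := by
        rw [volume_pi_pi, Fin.prod_univ_two]
        simp only [Matrix.cons_val_zero, Matrix.cons_val_one, Real.volume_Ioo]
        rw [← ENNReal.ofReal_mul (by linarith)]
        ring_nf
    _ ≤ volume (T ⁻¹' ellipse e c a b) := measure_mono hrect
    _ = volume (ellipse e c a b) :=
        hT.measure_preimage (isOpen_ellipse e c a b).measurableSet.nullMeasurableSet

theorem cheegerRatio_ellipse_le {q : ℝ} (hq : 0 ≤ q) (ha : 0 < a) (hb : 0 < b) :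
    cheegerRatio q (ellipse e c a b) ≤ 2 * π * (a + b) / (a * b) ^ (1 / q) := by
  have hvol : volume (ellipse e c a b) ≠ ⊤ := ((isCompact_closure_ellipse e c ha hb).measure_lt_top
    |>.trans_le' (measure_mono subset_closure)).ne
  have hlen : (μH[((2 : ℕ) : ℝ) - 1] (frontier (ellipse e c a b))).toReal ≤ 2 * π * (a + b) := by
    norm_num only
    exact ENNReal.toReal_le_of_le_ofReal (by positivity)
      (hausdorffMeasure_frontier_ellipse_le e c ha hb)
  have harea : a * b ≤ (volume (ellipse e c a b)).toReal :=
    (ENNReal.ofReal_le_iff_le_toReal hvol).mp (ofReal_mul_le_volume_ellipse e c ha hb)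
  exact div_le_div₀ (by positivity) hlen (by positivity)
    (Real.rpow_le_rpow (by positivity) harea (by positivity))

theorem closure_ellipse_subset_of_ray {Ω : Set ℝ²} (hconv : Convex ℝ Ω) {x₀ : ℝ²} {ρ : ℝ}
    (hball : Metric.ball x₀ ρ ⊆ Ω) (hray : ∀ t : ℝ, 0 ≤ t → x₀ + t • e 0 ∈ closure Ω)
    (ha : 0 < a) (hb : 0 < b) (hbρ : b < ρ / 2) :
    closure (ellipse e (x₀ + a • e 0) a b) ⊆ Ω := by
  intro p hp
  set c := x₀ + a • e 0
  obtain ⟨h0, h1⟩ := abs_inner_le_of_ellipseFun_nonpos e c ha hb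
    (ellipseFun_nonpos_of_mem_closure e c a b hp)
  have hp : p = x₀ + (a + ⟪e 0, p - c⟫) • e 0 + ⟪e 1, p - c⟫ • e 1 := by
    have h := e.sum_repr'_fin_two (p - c)
    simp only [c] at h ⊢
    linear_combination (norm := module) -h
  rw [hp]
  refine hconv.add_smul_add_mem_of_ball_subset hball hray (by linarith [(abs_le.mp h0).1]) ?_
  simpa [norm_smul] using h1.trans_lt hbρ

end Ellipse

theorem tendsto_two_pi_mul_add_div_mul_rpow_atTop {b q : ℝ} (hb : 0 < b) (hq0 : 0 < q)
    (hq1 : q < 1) :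
    Tendsto (fun a => 2 * π * (a + b) / (a * b) ^ (1 / q)) atTop (𝓝 0) := by
  have hexp : 0 < 1 / q - 1 := by rw [sub_pos, lt_div_iff₀ hq0]; linarith
  have hlim : Tendsto (fun a => 2 * π / b ^ (1 / q) * ((1 + b * a⁻¹) * a ^ (-(1 / q - 1))))
      atTop (𝓝 (2 * π / b ^ (1 / q) * ((1 + b * 0) * 0))) :=
    ((tendsto_const_nhds.add (tendsto_inv_atTop_zero.const_mul b)).mul
      (tendsto_rpow_neg_atTop hexp)).const_mul _
  rw [mul_zero, mul_zero] at hlim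
  refine hlim.congr' ?_
  filter_upwards [eventually_gt_atTop 0] with a ha
  rw [show -(1 / q - 1) = 1 - 1 / q by ring, rpow_sub ha, rpow_one, mul_rpow ha.le hb.le]
  have : 0 < a ^ (1 / q) := by positivity
  have : 0 < b ^ (1 / q) := by positivity
  field_simp

theorem Real.sInf_eq_zero_of_forall_exists_lt {s : Set ℝ} (hs : ∀ x ∈ s, 0 ≤ x)
    (h : ∀ ε > 0, ∃ x ∈ s, x < ε) : sInf s = 0 := by
  refine le_antisymm ?_ (Real.sInf_nonneg hs)
  obtain ⟨x, hx, -⟩ := h 1 one_pos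
  exact (Real.sInf_le_iff ⟨0, hs⟩ ⟨x, hx⟩).mpr fun ε hε => by simpa using h ε hε

theorem cheegerRatio_nonneg {N : ℕ} (q : ℝ) (E : Set (EuclideanSpace ℝ (Fin N))) :
    0 ≤ cheegerRatio q E := by
  unfold cheegerRatio
  positivity

theorem statement_18_general (Ω : Set (EuclideanSpace ℝ (Fin 2)))
    (hΩ : IsOpen Ω) (hconv : Convex ℝ Ω) (hunb : ¬ Bornology.IsBounded Ω)
    (q : ℝ) (hq0 : 0 < q) (hq1 : q < 1) :
    cheeger q Ω = 0 := by
  obtain ⟨x₀, hx₀⟩ := Bornology.nonempty_of_not_isBounded hunb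
  obtain ⟨ρ, hρ, hball⟩ := Metric.isOpen_iff.mp hΩ x₀ hx₀
  obtain ⟨v, hv, hray⟩ := hconv.exists_ray_subset_closure hunb hx₀
  obtain ⟨e, rfl⟩ :=
    exists_orthonormalBasis_apply_zero_eq (finrank_euclideanSpace_fin (n := 2)) hv
  have hb : 0 < ρ / 4 := by positivity
  refine Real.sInf_eq_zero_of_forall_exists_lt ?_ fun ε hε => ?_
  · rintro _ ⟨E, -, -, -, -, -, rfl⟩
    exact cheegerRatio_nonneg q E
  obtain ⟨a, hlt, ha⟩ := ((tendsto_two_pi_mul_add_div_mul_rpow_atTop hb hq0 hq1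
    |>.eventually_lt_const hε).and (eventually_gt_atTop 0)).exists
  exact ⟨_, ⟨ellipse e (x₀ + a • e 0) a (ρ / 4), isOpen_ellipse _ _ _ _,
    ⟨_, center_mem_ellipse _ _ ha hb⟩, isCompact_closure_ellipse _ _ ha hb,
    closure_ellipse_subset_of_ray e hconv hball hray ha hb (by linarith),
    hasSmoothBoundary_ellipse _ _ ha hb, rfl⟩,
    (cheegerRatio_ellipse_le _ _ hq0.le ha hb).trans_lt hlt⟩

/-- for an unbounded open convex set `Ω ⊆ ℝ²` with finite inradius and
`0 < q < 1`, one has `h_q(Ω) = 0`. -/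
theorem statement_18 (Ω : Set (EuclideanSpace ℝ (Fin 2)))
    (hΩ : IsOpen Ω) (hconv : Convex ℝ Ω) (hunb : ¬ Bornology.IsBounded Ω)
    (hfin : einradius Ω < ⊤) (q : ℝ) (hq0 : 0 < q) (hq1 : q < 1) :
    cheeger q Ω = 0 :=
  statement_18_general Ω hΩ hconv hunb q hq0 hq1

end
end
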